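/- Every element of the kernel of D on k[x,s,t,u,v] has constant term plus an element of the ideal (x,s); that is, ker D ⊆ k ⊕ (x,s)·k[x,s,t,u,v]. Equivalently, every element of ker D with zero constant term lies in the ideal generated by x and s. -/

import Mathlib

/-!
Write `f = ∑ xⁱ fᵢ` with `fᵢ` free of `x`. Since `D = δ + x³∂ₛ + x²∂ᵥ` with `δ = s∂ₜ + t∂ᵤ`,
comparing `x`-degrees in `D f = 0` gives `δ f₀ = δ f₁ = 0`, `δ f₂ = -x²∂ᵥ f₀` and
`δ f₃ = -x³∂ₛ f₀ - x²∂ᵥ f₁`; with the commutators of `δ` with `x^k ∂` this yields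
`x²∂ᵥ f₀ = δ(-f₂)` with `δ²(-f₂) = 0`, and `x³∂ₜ f₀ = δ² f₃` with `δ⁴ f₃ = 0`.

Now `δ` is the raising operator of an `sl₂`-triple `(h, δ, φ)` of derivations for which
`sᵃtᵇuᶜ` has `h`-weight `2(a - c)` and `φ` is locally nilpotent. In such a representation a
weight-`μ` vector killed by `δ^N` with `N + μ ≤ 0` is zero, so the weight-`μ` part of `δⁿ g`
vanishes as soon as `δ^N g = 0` and `N + μ ≤ 2n`. Hence the part of `f₀` of negative weight and
the weight-zero parts of `x²∂ᵥ f₀` and `x³∂ₜ f₀` vanish. A monomial of `f₀` without `s` has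
weight `-2c`, so it either contains `u` or is some `tᵇvᵉ`, which `∂ᵥ` or `∂ₜ` detects unless it
is the constant.
-/

namespace IsSl2Triple

open LieModule

variable {K L M : Type*} [CommRing K] [LieRing L] [LieAlgebra K L]
  [AddCommGroup M] [Module K M] [LieRingModule L M] [LieModule K L M] {h e f : L}

lemma pow_toEnd_e_succ_lie_f (t : IsSl2Triple h e f) {m : M} {μ : K} (hm : ⁅h, m⁆ = μ • m)
    (n : ℕ) :
    (toEnd K L M e ^ (n + 1)) ⁅f, m⁆ =
      ⁅f, (toEnd K L M e ^ (n + 1)) m⁆ + ((n + 1) * (μ + n)) • (toEnd K L M e ^ n) m := by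
  induction n with
  | zero => simp [leibniz_lie e f m, t.lie_e_f, hm, add_comm]
  | succ n ih =>
    rw [pow_succ' _ (n + 1), Module.End.mul_apply, ih, map_add, map_smul, toEnd_apply_apply,
      toEnd_apply_apply, leibniz_lie e f, t.lie_e_f, t.lie_h_pow_toEnd_e hm, lie_e_pow_toEnd_e,
      lie_e_pow_toEnd_e, ← pow_succ']
    push_cast
    module

variable [IsDomain K] [CharZero K] [Module.IsTorsionFree K M]

lemma eq_zero_of_lie_f_eq_zero (t : IsSl2Triple h e f) {m : M} {μ : ℤ}
    (hm : ⁅h, m⁆ = (μ : K) • m) (hf : ⁅f, m⁆ = 0) {N : ℕ} (hN : (toEnd K L M e ^ N) m = 0)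
    (hNμ : N + μ ≤ 0) : m = 0 := by
  by_contra hm0
  have hμ : (((-μ).toNat : ℕ) : K) = -(μ : K) := by
    rw [← Int.cast_natCast, Int.toNat_of_nonneg (by omega), Int.cast_neg]
  -- `m` is a primitive vector for the opposite triple `(-h, f, e)`.
  have P : t.symm.HasPrimitiveVectorWith m ((-μ).toNat : K) :=
    ⟨hm0, by rw [neg_lie, hm, hμ, neg_smul], hf⟩
  exact P.pow_toEnd_f_ne_zero_of_eq_nat rfl (by omega) hN

lemma eq_zero_of_pow_toEnd_e_eq_zero (t : IsSl2Triple h e f) {m : M} {μ : ℤ}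
    (hm : ⁅h, m⁆ = (μ : K) • m) {k : ℕ} (hk : (toEnd K L M f ^ k) m = 0) {N : ℕ}
    (hN : (toEnd K L M e ^ N) m = 0) (hNμ : N + μ ≤ 0) : m = 0 := by
  induction k generalizing m μ N with
  | zero => simpa using hk
  | succ k ih =>
    refine t.eq_zero_of_lie_f_eq_zero hm ?_ hN hNμ
    have hfm : ⁅h, ⁅f, m⁆⁆ = ((μ - 2 : ℤ) : K) • ⁅f, m⁆ := by
      rw [leibniz_lie, t.lie_lie_smul_f K, hm, lie_smul, neg_lie, smul_lie]
      push_cast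
      module
    refine ih hfm (by rwa [pow_succ, Module.End.mul_apply, toEnd_apply_apply] at hk)
      (N := N + 1) ?_ (by push_cast; omega)
    rw [t.pow_toEnd_e_succ_lie_f hm, hN, pow_succ', Module.End.mul_apply, hN]
    simp

end IsSl2Triple

lemma Derivation.map_ofNat {R A M : Type*} [CommSemiring R] [CommSemiring A] [Algebra R A]
    [AddCommMonoid M] [Module A M] [Module R M] (D : Derivation R A M) (n : ℕ) [n.AtLeastTwo] :
    D (ofNat(n) : A) = 0 :=
  D.map_natCast n

namespace MvPolynomial

variable {σ R M : Type*} [CommSemiring R]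

lemma IsWeightedHomogeneous.mul_pderiv [AddCommGroup M] {w : σ → M} {a p : MvPolynomial σ R}
    {i : σ} {c m : M} (ha : a.IsWeightedHomogeneous w (w i + c))
    (hp : p.IsWeightedHomogeneous w m) : (a * pderiv i p).IsWeightedHomogeneous w (m + c) := by
  convert ha.mul (hp.pderiv (sub_add_cancel m (w i))) using 1
  abel

lemma isWeightedHomogeneous_X_mul_pderiv [AddCommGroup M] {w : σ → M} {i j : σ} {c m : M}
    (h : w j = w i + c) {p : MvPolynomial σ R} (hp : p.IsWeightedHomogeneous w m) :
    (X j * pderiv i p).IsWeightedHomogeneous w (m + c) :=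
  (h ▸ isWeightedHomogeneous_X R w j).mul_pderiv hp

lemma coeff_X_pow_mul_pderiv {i j : σ} {k : ℕ} {μ : σ →₀ ℕ} (hμ : μ i ≠ 0)
    (p : MvPolynomial σ R) :
    coeff (Finsupp.single j k + (μ - Finsupp.single i 1)) (X j ^ k * pderiv i p) =
      coeff μ p * μ i := by
  rw [X_pow_eq_monomial, coeff_monomial_mul, one_mul, coeff_pderiv,
    Finsupp.sub_add_single_one_cancel hμ, Finsupp.tsub_apply, Finsupp.single_eq_same,
    ← Nat.cast_add_one, Nat.sub_add_cancel (Nat.one_le_iff_ne_zero.mpr hμ)]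

section Shift

variable [AddCommMonoid M] {w : σ → M} {c : M} {φ : Module.End R (MvPolynomial σ R)}

lemma IsWeightedHomogeneous.pow_apply
    (hφ : ∀ ⦃m p⦄, IsWeightedHomogeneous w p m → IsWeightedHomogeneous w (φ p) (m + c))
    {m : M} {p : MvPolynomial σ R} (hp : p.IsWeightedHomogeneous w m) (k : ℕ) :
    ((φ ^ k) p).IsWeightedHomogeneous w (m + k • c) := by
  induction k with
  | zero => simpa using hp
  | succ k ih => simpa [pow_succ', succ_nsmul, add_assoc] using hφ ih

lemma weightedHomogeneousComponent_apply_of_shift [IsLeftCancelAdd M] [IsRightCancelAdd M]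
    (hφ : ∀ ⦃m p⦄, IsWeightedHomogeneous w p m → IsWeightedHomogeneous w (φ p) (m + c))
    (m : M) (p : MvPolynomial σ R) :
    weightedHomogeneousComponent w (m + c) (φ p) = φ (weightedHomogeneousComponent w m p) := by
  induction p using MvPolynomial.induction_on' with
  | monomial ν r =>
    have hν := isWeightedHomogeneous_monomial w ν r rfl
    by_cases hm : Finsupp.weight w ν = m
    · subst hm
      rw [(hφ hν).weightedHomogeneousComponent_same, hν.weightedHomogeneousComponent_same]
    · rw [(hφ hν).weightedHomogeneousComponent_ne _ (by simpa [eq_comm] using hm),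
        hν.weightedHomogeneousComponent_ne _ (Ne.symm hm), map_zero]
  | add p q hp hq => simp only [map_add, hp, hq]

end Shift

section IntWeights

variable {w : σ → ℤ}

lemma weightedHomogeneousComponent_of_neg (hw : ∀ i, 0 ≤ w i) {m : ℤ} (hm : m < 0)
    (p : MvPolynomial σ R) : weightedHomogeneousComponent w m p = 0 :=
  weightedHomogeneousComponent_eq_zero' m p fun d _ hd => by
    have : 0 ≤ Finsupp.weight w d := by
      rw [Finsupp.weight_apply]
      exact Finset.sum_nonneg fun i _ => nsmul_nonneg (hw i) _
    omega

lemma exists_pow_apply_eq_zero_of_degree_decreasing (hw : ∀ i, 0 ≤ w i)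
    {φ : Module.End R (MvPolynomial σ R)}
    (hφ : ∀ ⦃m p⦄, IsWeightedHomogeneous w p m → IsWeightedHomogeneous w (φ p) (m + -1))
    (p : MvPolynomial σ R) : ∃ k : ℕ, (φ ^ k) p = 0 := by
  induction p using MvPolynomial.induction_on' with
  | monomial ν r =>
    refine ⟨(Finsupp.weight w ν).toNat + 1, ?_⟩
    have := (isWeightedHomogeneous_monomial w ν r rfl).pow_apply hφ
      ((Finsupp.weight w ν).toNat + 1)
    rw [← this.weightedHomogeneousComponent_same]
    exact weightedHomogeneousComponent_of_neg hw
      (by simp only [Int.nsmul_eq_mul, Nat.cast_add, Int.ofNat_toNat, Nat.cast_one]; omega) _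
  | add p q hp hq =>
    obtain ⟨a, ha⟩ := hp
    obtain ⟨b, hb⟩ := hq
    exact ⟨max a b, by rw [map_add, Module.End.pow_map_zero_of_le (le_max_left a b) ha,
      Module.End.pow_map_zero_of_le (le_max_right a b) hb, add_zero]⟩

theorem IsWeightedHomogeneous.sum_zsmul_X_mul_pderiv {R : Type*} [CommRing R] [Fintype σ]
    {φ : MvPolynomial σ R} {n : ℤ} (h : φ.IsWeightedHomogeneous w n) :
    ∑ i : σ, w i • (X i * pderiv i φ) = n • φ := by
  rw [φ.as_sum]
  simp_rw [map_sum, Finset.mul_sum, X_mul_pderiv_monomial, Finset.smul_sum]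
  rw [Finset.sum_comm]
  refine Finset.sum_congr rfl fun ν hν => ?_
  rw [← h (mem_support_iff.mp hν), Finsupp.weight_apply, Finsupp.sum_fintype _ _ (by simp),
    Finset.sum_smul]
  exact Finset.sum_congr rfl fun i _ => by rw [smul_comm, smul_assoc]

end IntWeights

end MvPolynomial

open MvPolynomial

-- The variables `x, s, t, u, v` are `X 0, …, X 4`; `sl2e` is `δ` and `derivation K` is `D`.
namespace DaigleFreudenburg

section CommRing

variable (K : Type*) [CommRing K]

local notation "𝒫" => MvPolynomial (Fin 5) K

noncomputable def sl2e : Derivation K 𝒫 𝒫 := (X 1 : 𝒫) • pderiv 2 + (X 2 : 𝒫) • pderiv 3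

noncomputable def sl2f : Derivation K 𝒫 𝒫 := 2 • ((X 2 : 𝒫) • pderiv 1 + (X 3 : 𝒫) • pderiv 2)

noncomputable def sl2h : Derivation K 𝒫 𝒫 := 2 • ((X 1 : 𝒫) • pderiv 1 - (X 3 : 𝒫) • pderiv 3)

noncomputable def derivation : Derivation K 𝒫 𝒫 :=
  sl2e K + (X 0 ^ 3 : 𝒫) • pderiv 1 + (X 0 ^ 2 : 𝒫) • pderiv 4

def sl2Weight : Fin 5 → ℤ := ![0, 2, 0, -2, 0]

def xDegree : Fin 5 → ℤ := ![1, 0, 0, 0, 0]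

/-- `sl2f` lowers this degree by one, which makes it locally nilpotent. -/
def height : Fin 5 → ℤ := ![0, 2, 1, 0, 0]

lemma lie_sl2e_sl2f : ⁅sl2e K, sl2f K⁆ = sl2h K := derivation_ext fun i => by
  fin_cases i <;> simp [sl2e, sl2f, sl2h, Derivation.commutator_apply, Derivation.map_ofNat] <;>
    ring

lemma lie_sl2h_sl2e : ⁅sl2h K, sl2e K⁆ = 2 • sl2e K := derivation_ext fun i => by
  fin_cases i <;> simp [sl2e, sl2h, Derivation.commutator_apply, Derivation.map_ofNat]; ring

lemma lie_sl2h_sl2f : ⁅sl2h K, sl2f K⁆ = -(2 • sl2f K) := derivation_ext fun i => by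
  fin_cases i <;> simp [sl2f, sl2h, Derivation.commutator_apply, Derivation.map_ofNat] <;> ring

theorem isSl2Triple [CharZero K] : IsSl2Triple (sl2h K) (sl2e K) (sl2f K) :=
  ⟨fun h => by simpa [sl2h] using congr($h (X 1)), lie_sl2e_sl2f K, lie_sl2h_sl2e K,
    lie_sl2h_sl2f K⟩

lemma lie_sl2e_X_zero_pow_smul_pderiv_one (k : ℕ) :
    ⁅sl2e K, (X 0 ^ k : 𝒫) • (pderiv 1 : Derivation K 𝒫 𝒫)⁆ = -((X 0 ^ k : 𝒫) • pderiv 2) :=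
  derivation_ext fun i => by fin_cases i <;> simp [sl2e, Derivation.commutator_apply]

lemma lie_sl2e_X_zero_pow_smul_pderiv_two (k : ℕ) :
    ⁅sl2e K, (X 0 ^ k : 𝒫) • (pderiv 2 : Derivation K 𝒫 𝒫)⁆ = -((X 0 ^ k : 𝒫) • pderiv 3) :=
  derivation_ext fun i => by fin_cases i <;> simp [sl2e, Derivation.commutator_apply]

lemma lie_sl2e_X_zero_pow_smul_pderiv_of_two_lt {i : Fin 5} (hi : 2 < i) (k : ℕ) :
    ⁅sl2e K, (X 0 ^ k : 𝒫) • (pderiv i : Derivation K 𝒫 𝒫)⁆ = 0 := by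
  obtain rfl | rfl : i = 3 ∨ i = 4 := by omega
  all_goals
    refine derivation_ext fun j => ?_
    fin_cases j <;> simp [sl2e, Derivation.commutator_apply]

variable {K}

lemma sl2e_X_zero_pow_mul_pderiv (k : ℕ) (i : Fin 5) (p : 𝒫) :
    sl2e K (X 0 ^ k * pderiv i p) = X 0 ^ k * pderiv i (sl2e K p) +
      ⁅sl2e K, (X 0 ^ k : 𝒫) • (pderiv i : Derivation K 𝒫 𝒫)⁆ p := by
  simp [Derivation.commutator_apply]

lemma isWeightedHomogeneous_sl2e_apply {w : Fin 5 → ℤ} {c : ℤ} (h1 : w 1 = w 2 + c)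
    (h2 : w 2 = w 3 + c) {m : ℤ} {p : 𝒫} (hp : p.IsWeightedHomogeneous w m) :
    (sl2e K p).IsWeightedHomogeneous w (m + c) := by
  simp only [sl2e, Derivation.add_apply, Derivation.smul_apply, smul_eq_mul]
  exact (isWeightedHomogeneous_X_mul_pderiv h1 hp).add (isWeightedHomogeneous_X_mul_pderiv h2 hp)

lemma isWeightedHomogeneous_sl2f_apply {m : ℤ} {p : 𝒫}
    (hp : p.IsWeightedHomogeneous height m) :
    (sl2f K p).IsWeightedHomogeneous height (m + -1) := by
  have h := (isWeightedHomogeneous_X_mul_pderiv (i := 1) (j := 2) (c := -1) (by decide) hp).add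
    (isWeightedHomogeneous_X_mul_pderiv (i := 2) (j := 3) (c := -1) (by decide) hp)
  have hf : sl2f K p =
      (X 2 * pderiv 1 p + X 3 * pderiv 2 p) + (X 2 * pderiv 1 p + X 3 * pderiv 2 p) := by
    simp only [sl2f, Derivation.smul_apply, Derivation.add_apply, smul_eq_mul, two_smul]
  exact hf ▸ h.add h

lemma isWeightedHomogeneous_X_zero_pow_mul_pderiv {i : Fin 5} (hi : i ≠ 0) (k : ℕ) {m : ℤ}
    {p : 𝒫} (hp : p.IsWeightedHomogeneous xDegree m) :
    (X 0 ^ k * pderiv i p).IsWeightedHomogeneous xDegree (m + k) := by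
  have hk : k • xDegree 0 = xDegree i + k := by fin_cases i <;> simp_all [xDegree]
  exact (hk ▸ (isWeightedHomogeneous_X K xDegree 0).pow k).mul_pderiv hp

lemma sl2h_apply_of_isWeightedHomogeneous {μ : ℤ} {p : 𝒫}
    (hp : p.IsWeightedHomogeneous sl2Weight μ) : sl2h K p = (μ : K) • p := by
  rw [Int.cast_smul_eq_zsmul, ← hp.sum_zsmul_X_mul_pderiv]
  simp only [sl2h, sl2Weight, Fin.sum_univ_five, Derivation.coe_smul, Derivation.coe_sub,
    Pi.smul_apply, Pi.sub_apply, smul_eq_mul, nsmul_eq_mul, zsmul_eq_mul]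
  push_cast
  ring

noncomputable def slice (f : 𝒫) (i : ℤ) : 𝒫 := weightedHomogeneousComponent xDegree i f

lemma slice_of_neg (f : 𝒫) {i : ℤ} (hi : i < 0) : slice f i = 0 :=
  weightedHomogeneousComponent_of_neg (by decide) hi f

lemma sl2e_slice_add_eq_zero {f : 𝒫} (hf : derivation K f = 0) (i : ℤ) :
    sl2e K (slice f i) + X 0 ^ 3 * pderiv 1 (slice f (i - 3))
      + X 0 ^ 2 * pderiv 4 (slice f (i - 2)) = 0 := by
  have h0 := weightedHomogeneousComponent_apply_of_shift (φ := (sl2e K : Module.End K 𝒫))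
    (fun _ _ => isWeightedHomogeneous_sl2e_apply (w := xDegree) (c := 0) (by decide) (by decide))
    i f
  have h3 := weightedHomogeneousComponent_apply_of_shift
    (φ := ((X 0 ^ 3 : 𝒫) • pderiv 1 : Derivation K 𝒫 𝒫))
    (fun _ _ hp => by simpa using isWeightedHomogeneous_X_zero_pow_mul_pderiv (by decide) 3 hp)
    (i - 3) f
  have h2 := weightedHomogeneousComponent_apply_of_shift
    (φ := ((X 0 ^ 2 : 𝒫) • pderiv 4 : Derivation K 𝒫 𝒫))
    (fun _ _ hp => by simpa using isWeightedHomogeneous_X_zero_pow_mul_pderiv (by decide) 2 hp)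
    (i - 2) f
  simp only [add_zero, sub_add_cancel, Derivation.coeFn_coe, Derivation.smul_apply,
    smul_eq_mul] at h0 h2 h3
  rw [slice, slice, slice, ← h0, ← h2, ← h3, ← map_add, ← map_add]
  simpa [derivation] using congr(weightedHomogeneousComponent xDegree i $hf)

lemma weight_xDegree (μ : Fin 5 →₀ ℕ) : Finsupp.weight xDegree μ = μ 0 := by
  simp [Finsupp.weight_apply, Finsupp.sum_fintype, Fin.sum_univ_five, xDegree]

lemma weight_sl2Weight (μ : Fin 5 →₀ ℕ) : Finsupp.weight sl2Weight μ = 2 * μ 1 - 2 * μ 3 := by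
  simp [Finsupp.weight_apply, Finsupp.sum_fintype, Fin.sum_univ_five, sl2Weight, mul_comm,
    sub_eq_add_neg]

end CommRing

variable {K : Type*} [Field K]

local notation "𝒫" => MvPolynomial (Fin 5) K

local notation "𝔢" => (sl2e K : Module.End K 𝒫)

lemma pow_sl2e_succ_apply (n : ℕ) (p : 𝒫) : (𝔢 ^ (n + 1)) p = (𝔢 ^ n) (sl2e K p) := by
  rw [pow_succ, Module.End.mul_apply, Derivation.coeFn_coe]

variable [CharZero K]

theorem weightedHomogeneousComponent_pow_sl2e_eq_zero {g : 𝒫} {N n : ℕ} {μ : ℤ}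
    (hg : (𝔢 ^ N) g = 0) (hμ : N + μ ≤ 2 * n) :
    weightedHomogeneousComponent sl2Weight μ ((𝔢 ^ n) g) = 0 := by
  have hshift (k : ℕ) (l : ℤ) (p : 𝒫) :
      weightedHomogeneousComponent sl2Weight (l + k • 2) ((𝔢 ^ k) p) =
        (𝔢 ^ k) (weightedHomogeneousComponent sl2Weight l p) :=
    weightedHomogeneousComponent_apply_of_shift (fun _ _ hp => hp.pow_apply
      (fun _ _ => isWeightedHomogeneous_sl2e_apply (by decide) (by decide)) k) l p
  have hw : weightedHomogeneousComponent sl2Weight (μ - 2 * n) g = 0 := by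
    obtain ⟨k, hk⟩ := exists_pow_apply_eq_zero_of_degree_decreasing (w := height) (by decide)
      (φ := (sl2f K : Module.End K 𝒫)) (fun _ _ => isWeightedHomogeneous_sl2f_apply)
      (weightedHomogeneousComponent sl2Weight (μ - 2 * n) g)
    refine (isSl2Triple K).eq_zero_of_pow_toEnd_e_eq_zero (μ := μ - 2 * n)
      (sl2h_apply_of_isWeightedHomogeneous (weightedHomogeneousComponent_isWeightedHomogeneous _ _))
      hk (N := N) ?_ (by omega)
    change (𝔢 ^ N) _ = 0
    rw [← hshift, hg, map_zero]
  rw [show μ = μ - 2 * n + n • 2 by simp; ring, hshift, hw, map_zero]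

lemma weightedHomogeneousComponent_eq_zero_of_sl2e_eq_zero {g : 𝒫} (hg : sl2e K g = 0) {μ : ℤ}
    (hμ : μ < 0) : weightedHomogeneousComponent sl2Weight μ g = 0 := by
  simpa using weightedHomogeneousComponent_pow_sl2e_eq_zero (N := 1) (n := 0) (by simpa using hg)
    (by omega)

lemma weightedHomogeneousComponent_X_zero_sq_mul_pderiv_four {g₀ g₂ : 𝒫} (h₀ : sl2e K g₀ = 0)
    (h₂ : sl2e K g₂ = -(X 0 ^ 2 * pderiv 4 g₀)) :
    weightedHomogeneousComponent sl2Weight 0 (X 0 ^ 2 * pderiv 4 g₀) = 0 := by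
  have h := weightedHomogeneousComponent_pow_sl2e_eq_zero (g := -g₂) (N := 2) (n := 1) (μ := 0)
    ?_ (by norm_num)
  · simpa only [pow_sl2e_succ_apply, pow_zero, Module.End.one_apply, map_neg, h₂, neg_neg]
      using h
  · simp only [pow_sl2e_succ_apply, pow_zero, map_neg, h₂,
      sl2e_X_zero_pow_mul_pderiv, h₀, lie_sl2e_X_zero_pow_smul_pderiv_of_two_lt K
      (by decide : (2 : Fin 5) < 4), map_zero, mul_zero, Derivation.zero_apply, add_zero,
      neg_zero]

lemma weightedHomogeneousComponent_X_zero_cube_mul_pderiv_two {g₀ g₁ g₃ : 𝒫}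
    (h₀ : sl2e K g₀ = 0) (h₁ : sl2e K g₁ = 0)
    (h₃ : sl2e K g₃ = -(X 0 ^ 3 * pderiv 1 g₀) - X 0 ^ 2 * pderiv 4 g₁) :
    weightedHomogeneousComponent sl2Weight 0 (X 0 ^ 3 * pderiv 2 g₀) = 0 := by
  have h₃' : sl2e K (sl2e K g₃) = X 0 ^ 3 * pderiv 2 g₀ := by
    simp only [h₃, map_sub, map_neg, sl2e_X_zero_pow_mul_pderiv, h₀, h₁,
      lie_sl2e_X_zero_pow_smul_pderiv_one, lie_sl2e_X_zero_pow_smul_pderiv_of_two_lt K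
      (by decide : (2 : Fin 5) < 4), map_zero, mul_zero, Derivation.neg_apply,
      Derivation.smul_apply, Derivation.zero_apply, smul_eq_mul]
    ring
  have h := weightedHomogeneousComponent_pow_sl2e_eq_zero (g := g₃) (N := 4) (n := 2) (μ := 0)
    ?_ (by norm_num)
  · simpa only [pow_sl2e_succ_apply, pow_zero, Module.End.one_apply, h₃'] using h
  · simp only [pow_sl2e_succ_apply, pow_zero, h₃',
      sl2e_X_zero_pow_mul_pderiv, h₀, lie_sl2e_X_zero_pow_smul_pderiv_two,
      lie_sl2e_X_zero_pow_smul_pderiv_of_two_lt K (by decide : (2 : Fin 5) < 3), map_zero,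
      mul_zero, map_neg, Derivation.neg_apply, Derivation.smul_apply,
      Derivation.zero_apply, smul_eq_mul, zero_add, add_zero, neg_zero]

lemma coeff_eq_zero_of_weightedHomogeneousComponent_X_zero_pow_mul_pderiv {g : 𝒫}
    {μ : Fin 5 →₀ ℕ} {i : Fin 5} {k : ℕ} (hi : sl2Weight i = 0)
    (hμ : Finsupp.weight sl2Weight μ = 0) (hμi : μ i ≠ 0)
    (h : weightedHomogeneousComponent sl2Weight 0 (X 0 ^ k * pderiv i g) = 0) :
    coeff μ g = 0 := by
  have hν : Finsupp.weight sl2Weight (Finsupp.single 0 k + (μ - Finsupp.single i 1)) = 0 := by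
    have := Finsupp.weight_sub_single_add (w := sl2Weight) hμi
    rw [map_add, Finsupp.weight_single, show sl2Weight 0 = 0 from rfl, smul_zero, zero_add]
    omega
  have := congr(coeff (Finsupp.single 0 k + (μ - Finsupp.single i 1)) $h)
  rw [coeff_weightedHomogeneousComponent, if_pos hν, coeff_X_pow_mul_pderiv hμi,
    coeff_zero] at this
  exact (mul_eq_zero.mp this).resolve_right (Nat.cast_ne_zero.mpr hμi)

theorem coeff_eq_zero_of_derivation_eq_zero {f : 𝒫} (hf : derivation K f = 0)
    {μ : Fin 5 →₀ ℕ} (h0 : μ 0 = 0) (h1 : μ 1 = 0) (hμ : μ ≠ 0) : coeff μ f = 0 := by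
  have hslice := sl2e_slice_add_eq_zero hf
  have h₀ : sl2e K (slice f 0) = 0 := by simpa [slice_of_neg] using hslice 0
  have h₁ : sl2e K (slice f 1) = 0 := by simpa [slice_of_neg] using hslice 1
  have h₂ : sl2e K (slice f 2) = -(X 0 ^ 2 * pderiv 4 (slice f 0)) := by
    simpa [slice_of_neg, add_eq_zero_iff_eq_neg] using hslice 2
  have h₃ : sl2e K (slice f 3) =
      -(X 0 ^ 3 * pderiv 1 (slice f 0)) - X 0 ^ 2 * pderiv 4 (slice f 1) := by
    linear_combination (norm := norm_num) hslice 3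
  have hf₀ : coeff μ f = coeff μ (slice f 0) := by
    rw [slice, coeff_weightedHomogeneousComponent, if_pos (by simp [weight_xDegree, h0])]
  rw [hf₀]
  by_cases h3 : μ 3 = 0
  · have hθ : Finsupp.weight sl2Weight μ = 0 := by simp [weight_sl2Weight, h1, h3]
    by_cases h4 : μ 4 = 0
    · have h2 : μ 2 ≠ 0 := fun h2 => hμ (by ext i; fin_cases i <;> simp [*])
      exact coeff_eq_zero_of_weightedHomogeneousComponent_X_zero_pow_mul_pderiv (i := 2) (k := 3)
        rfl hθ h2 (weightedHomogeneousComponent_X_zero_cube_mul_pderiv_two h₀ h₁ h₃)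
    · exact coeff_eq_zero_of_weightedHomogeneousComponent_X_zero_pow_mul_pderiv (i := 4) (k := 2)
        rfl hθ h4 (weightedHomogeneousComponent_X_zero_sq_mul_pderiv_four h₀ h₂)
  · have := weightedHomogeneousComponent_eq_zero_of_sl2e_eq_zero h₀
      (μ := Finsupp.weight sl2Weight μ) (by rw [weight_sl2Weight]; omega)
    simpa [coeff_weightedHomogeneousComponent] using congr(coeff μ $this)

end DaigleFreudenburg

theorem daigle_freudenburg_kernel_in_ideal
    (K : Type*) [Field K] [CharZero K]
    (D : Derivation K (MvPolynomial (Fin 5) K) (MvPolynomial (Fin 5) K))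
    (hx : D (X 0) = 0) (hs : D (X 1) = X 0 ^ 3) (ht : D (X 2) = X 1)
    (hu : D (X 3) = X 2) (hv : D (X 4) = X 0 ^ 2) :
    ∀ f : MvPolynomial (Fin 5) K, D f = 0 →
      ∃ c : K, f - C c ∈ Ideal.span ({X 0, X 1} : Set (MvPolynomial (Fin 5) K)) := by
  have hD : D = DaigleFreudenburg.derivation K := derivation_ext fun i => by
    fin_cases i <;>
      simp [DaigleFreudenburg.derivation, DaigleFreudenburg.sl2e, hx, hs, ht, hu, hv]
  intro f hf
  refine ⟨coeff 0 f, ?_⟩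
  rw [← Set.image_pair, mem_ideal_span_X_image]
  intro μ hμ
  by_contra! h
  have hμ0 : μ ≠ 0 := by rintro rfl; simp at hμ
  rw [mem_support_iff, coeff_sub, coeff_C, if_neg (Ne.symm hμ0), sub_zero] at hμ
  exact hμ (DaigleFreudenburg.coeff_eq_zero_of_derivation_eq_zero (hD ▸ hf) (h 0 (by simp))
    (h 1 (by simp)) hμ0)
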